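/- The map A ↦ ζ₊(A) = (1 + √(A+1))², with √ the principal square root, is injective and holomorphic on the open upper half-plane {Im A > 0}, and maps it into the open upper half-plane. -/

import Mathlib

/-!
Write `ζ₊(A) = (1 + w)²` with `w = √(A+1)`. The principal root sends the slit plane to the
right half-plane `Re w > 0` and the upper half-plane into the upper half-plane, since it halves
the argument. On `Re w > -1` the map `w ↦ (1 + w)²` is injective, because `(1 + w) + (1 + w')`
cannot vanish there, and it has imaginary part `2 (1 + Re w) Im w`, positive when `Im w > 0`.
Injectivity of `√` itself comes from `(√z)² = z`.
-/

open Filter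

/-- Principal square root on `ℂ`. -/
noncomputable def sqrtc (z : ℂ) : ℂ := z ^ ((1 : ℂ) / 2)

/-- The root `ζ₊(A) = (1 + √(A+1))²` of `D_A(z) = (z−A)² − 4z`. -/
noncomputable def zetaP (A : ℂ) : ℂ := (1 + sqrtc (A + 1)) ^ 2

/-- The root `ζ₋(A) = (1 − √(A+1))²` of `D_A(z) = (z−A)² − 4z`. -/
noncomputable def zetaM (A : ℂ) : ℂ := (1 - sqrtc (A + 1)) ^ 2

open Complex Real

lemma sqrtc_sq (z : ℂ) : sqrtc z ^ 2 = z := by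
  simp [sqrtc]

lemma sqrtc_injective : Function.Injective sqrtc :=
  Function.LeftInverse.injective (g := fun w => w ^ 2) sqrtc_sq

lemma sqrtc_eq_exp {z : ℂ} (hz : z ≠ 0) : sqrtc z = exp (log z / 2) := by
  rw [sqrtc, cpow_def_of_ne_zero hz, mul_one_div]

lemma re_sqrtc_pos {z : ℂ} (hz : z ∈ slitPlane) : 0 < (sqrtc z).re := by
  have harg : -π < arg z ∧ arg z < π :=
    ⟨neg_pi_lt_arg z, (arg_le_pi z).lt_of_ne (mem_slitPlane_iff_arg.mp hz).1⟩
  have hcos : 0 < Real.cos (arg z / 2) :=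
    Real.cos_pos_of_mem_Ioo ⟨by linarith, by linarith⟩
  rw [sqrtc_eq_exp (slitPlane_ne_zero hz), exp_re, div_ofNat_im, log_im]
  positivity

lemma im_sqrtc_pos {z : ℂ} (hz : 0 < z.im) : 0 < (sqrtc z).im := by
  have harg : 0 < arg z ∧ arg z < π :=
    ⟨(arg_nonneg_iff.mpr hz.le).lt_of_ne fun h => hz.ne' (arg_eq_zero_iff.mp h.symm).2,
      arg_lt_pi_iff.mpr (Or.inr hz.ne')⟩
  have hsin : 0 < Real.sin (arg z / 2) :=
    Real.sin_pos_of_pos_of_lt_pi (by linarith) (by linarith)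
  rw [sqrtc_eq_exp fun h => hz.ne' (by simp [h]), exp_im, div_ofNat_im, log_im]
  positivity

lemma differentiableAt_sqrtc {z : ℂ} (hz : z ∈ slitPlane) : DifferentiableAt ℂ sqrtc z :=
  differentiableAt_id.cpow_const hz

lemma injOn_one_add_sq : Set.InjOn (fun w : ℂ => (1 + w) ^ 2) {w | -1 < w.re} := by
  intro w hw w' hw' h
  have hsum : (1 + w) + (1 + w') ≠ 0 := fun h0 => by
    have := congrArg re h0
    simp only [add_re, one_re, zero_re] at this
    linarith [show -1 < w.re from hw, show -1 < w'.re from hw']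
  have hprod : ((1 + w) - (1 + w')) * ((1 + w) + (1 + w')) = 0 := by
    linear_combination h
  linear_combination (mul_eq_zero.mp hprod).resolve_right hsum

lemma im_one_add_sq (w : ℂ) : ((1 + w) ^ 2).im = 2 * (1 + w.re) * w.im := by
  simp only [sq, mul_im, add_re, add_im, one_re, one_im]
  ring

/-- `A ↦ ζ₊(A)` is injective and holomorphic on the open upper half-plane and maps it
into the open upper half-plane. -/
theorem zetaP_conformal :
    Set.InjOn zetaP {z : ℂ | 0 < z.im} ∧
      DifferentiableOn ℂ zetaP {z : ℂ | 0 < z.im} ∧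
      Set.MapsTo zetaP {z : ℂ | 0 < z.im} {z : ℂ | 0 < z.im} := by
  have hshift {A : ℂ} (hA : 0 < A.im) : 0 < (A + 1).im := by simpa using hA
  have hslit {A : ℂ} (hA : 0 < A.im) : A + 1 ∈ slitPlane := Or.inr (hshift hA).ne'
  have hre {A : ℂ} (hA : 0 < A.im) : -1 < (sqrtc (A + 1)).re := by
    linarith [re_sqrtc_pos (hslit hA)]
  refine ⟨fun A hA B hB h => ?_, fun A hA => ?_, fun A hA => ?_⟩
  · have hroot := injOn_one_add_sq (hre hA) (hre hB) h
    exact add_right_cancel (sqrtc_injective hroot)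
  · have hdiff : DifferentiableAt ℂ (fun A => sqrtc (A + 1)) A :=
      (differentiableAt_sqrtc (hslit hA)).comp A (differentiableAt_id.add_const 1)
    exact ((hdiff.const_add 1).pow 2).differentiableWithinAt
  · change 0 < ((1 + sqrtc (A + 1)) ^ 2).im
    rw [im_one_add_sq]
    have := hre hA
    have := im_sqrtc_pos (hshift hA)
    nlinarith
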